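/- arXiv:1404.1589 — 2 statements merged into one kernel-verified Lean document; each statement's English description precedes it below -/
import Mathlib

section
/- Let S be a proper *-semigroup in which ∼ is reflexive and ⊥-complete. Then for all A, B ∈ P(S)^⊥ there exists I ∈ P(S)^∇ such that A ∩ I ≾ B ∩ I and B ∩ I^⊥ ≾ A ∩ I^⊥. -/
namespace Stmt18

/-- The *-annihilator `T^⊥`. -/
def pAnn {S : Type*} [Mul S] [Star S] [Zero S] (T : Set S) : Set S :=
  {s | ∀ t ∈ T, t * star s = 0 ∧ t * s = 0}

/-- The annihilator ideal `T^∇`. -/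
def nAnn {S : Type*} [Mul S] [Star S] [Zero S] (T : Set S) : Set S :=
  {s | ∀ t ∈ T, ∀ u : S, t * u * s = 0}

/-- `P(S)^⊥ = {T^⊥ : T ⊆ S}`. -/
def Pperp (S : Type*) [Mul S] [Star S] [Zero S] : Set (Set S) := {A | ∃ T : Set S, A = pAnn T}

/-- `P(S)^∇ = {T^∇ : T ⊆ S}`. -/
def Pnabla (S : Type*) [Mul S] [Star S] [Zero S] : Set (Set S) := {A | ∃ T : Set S, A = nAnn T}

/-- `A ∼ B`: there is `s ∈ S` with `{s}^⊥⊥ = A` and `{s*}^⊥⊥ = B`. -/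
def Sim {S : Type*} [Mul S] [Star S] [Zero S] (A B : Set S) : Prop :=
  ∃ s : S, pAnn (pAnn {s}) = A ∧ pAnn (pAnn {star s}) = B

/-- `A ≾ B`: `A ∼ C ⊆ B` for some `C ∈ P(S)^⊥`. -/
def PrecSim {S : Type*} [Mul S] [Star S] [Zero S] (A B : Set S) : Prop :=
  ∃ C ∈ Pperp S, Sim A C ∧ C ⊆ B

/-- `∼` is ⊥-complete: for any index set `Λ` and pairwise orthogonal families
`(A_λ)`, `(B_λ)` in `P(S)^⊥` with `A_λ ∼ B_λ` for all `λ`, one has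
`(⋂ A_λ^⊥)^⊥ ∼ (⋂ B_λ^⊥)^⊥`. -/
def PerpComplete (S : Type u) [Mul S] [Star S] [Zero S] : Prop :=
  ∀ (Λ : Type u) (A B : Λ → Set S),
    (∀ l, A l ∈ Pperp S) → (∀ l, B l ∈ Pperp S) →
    (∀ l m, l ≠ m → A l ⊆ pAnn (A m)) → (∀ l m, l ≠ m → B l ⊆ pAnn (B m)) →
    (∀ l, Sim (A l) (B l)) →
    Sim (pAnn (⋂ l, pAnn (A l))) (pAnn (⋂ l, pAnn (B l)))

section Lemmas

variable {S : Type*} [SemigroupWithZero S] [StarMul S]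

/-- shorthand for properness -/
def IsProper (S : Type*) [Mul S] [Star S] [Zero S] : Prop :=
  ∀ s : S, star s * s = 0 → s = 0

lemma mem_pAnn {T : Set S} {s : S} :
    s ∈ pAnn T ↔ ∀ t ∈ T, t * star s = 0 ∧ t * s = 0 := Iff.rfl

lemma pAnn_anti {T U : Set S} (h : T ⊆ U) : pAnn U ⊆ pAnn T :=
  fun _ hs t ht => hs t (h ht)

lemma star_mem_pAnn {T : Set S} {s : S} (hs : s ∈ pAnn T) : star s ∈ pAnn T := by
  intro t ht
  obtain ⟨h1, h2⟩ := hs t ht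
  exact ⟨by rwa [star_star], h1⟩

lemma star_zero' (hp : IsProper S) : (star (0:S)) = 0 := by
  apply hp; rw [star_star, zero_mul]

lemma p1 (hp : IsProper S) {s : S} (h : s * star s = 0) : s = 0 := by
  have h2 : star s = 0 := hp (star s) (by rwa [star_star])
  calc s = star (star s) := (star_star s).symm
  _ = star 0 := by rw [h2]
  _ = 0 := star_zero' hp

lemma p2 (hp : IsProper S) {m : S} (hm : star m = m) (h : m * m = 0) : m = 0 := by
  apply hp; rwa [hm]

lemma p3 (hp : IsProper S) {s : S} (h : s * star s * s = 0) : s = 0 := by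
  have hm : (star s * s) * (star s * s) = 0 := by
    have e : (star s * s) * (star s * s) = star s * (s * star s * s) := by
      simp only [mul_assoc]
    rw [e, h, mul_zero]
  have : star s * s = 0 := p2 hp (by rw [star_mul, star_star]) hm
  exact hp s this

lemma zero_mem_pAnn (hp : IsProper S) {T : Set S} : (0:S) ∈ pAnn T := by
  intro t _
  constructor
  · rw [star_zero' hp, mul_zero]
  · rw [mul_zero]

lemma sq_mem_dpT (hp : IsProper S) {T : Set S} {t : S} (ht : t ∈ T) :
    star t * t ∈ pAnn (pAnn T) := by
  intro w hw
  obtain ⟨h1, h2⟩ := hw t ht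
  have hws : w * star t = 0 := by
    have := congrArg star h1
    rwa [star_mul, star_star, star_zero' hp] at this
  constructor
  · rw [star_mul, star_star]
    rw [show w * (star t * t) = (w * star t) * t from (mul_assoc _ _ _).symm, hws, zero_mul]
  · rw [show w * (star t * t) = (w * star t) * t from (mul_assoc _ _ _).symm, hws, zero_mul]

lemma subset_dp (hp : IsProper S) {T : Set S} (hTs : ∀ s ∈ T, star s ∈ T) :
    T ⊆ pAnn (pAnn T) := by
  intro t ht w hw
  obtain ⟨h1, _⟩ := hw t ht
  obtain ⟨h3, _⟩ := hw (star t) (hTs t ht)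
  constructor
  · have := congrArg star h1
    rwa [star_mul, star_star, star_zero' hp] at this
  · have := congrArg star h3
    rwa [star_mul, star_star, star_star, star_zero' hp] at this

lemma pAnn_triple (hp : IsProper S) (T : Set S) : pAnn (pAnn (pAnn T)) = pAnn T := by
  apply Set.Subset.antisymm
  · intro r hr t ht
    obtain ⟨h1, h2⟩ := hr (star t * t) (sq_mem_dpT hp ht)
    constructor
    · apply hp
      have e : star (t * star r) * (t * star r) = r * (star t * t * star r) := by
        simp only [star_mul, star_star, mul_assoc]
      rw [e, h1, mul_zero]
    · apply hp
      have e : star (t * r) * (t * r) = star r * (star t * t * r) := by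
        simp only [star_mul, star_star, mul_assoc]
      rw [e, h2, mul_zero]
  · exact subset_dp hp (fun s hs => star_mem_pAnn hs)

lemma dp_subset_of_mem_pAnn (hp : IsProper S) {T : Set S} {x : S} (hx : x ∈ pAnn T) :
    pAnn (pAnn ({x} : Set S)) ⊆ pAnn T := by
  have h1 : pAnn (pAnn T) ⊆ pAnn ({x} : Set S) := by
    intro w hw
    intro t ht
    rw [Set.mem_singleton_iff] at ht
    subst ht
    exact hw _ hx
  have h2 : pAnn (pAnn ({x} : Set S)) ⊆ pAnn (pAnn (pAnn T)) := pAnn_anti h1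
  rwa [pAnn_triple hp T] at h2

lemma right_factor {a b : S} : pAnn ({b} : Set S) ⊆ pAnn ({a * b} : Set S) := by
  intro r hr t ht
  rw [Set.mem_singleton_iff] at ht; subst ht
  obtain ⟨h1, h2⟩ := hr b rfl
  constructor
  · rw [mul_assoc, h1, mul_zero]
  · rw [mul_assoc, h2, mul_zero]

lemma pAnn_union (T U : Set S) : pAnn (T ∪ U) = pAnn T ∩ pAnn U := by
  ext s
  constructor
  · intro h
    exact ⟨fun t ht => h t (Or.inl ht), fun t ht => h t (Or.inr ht)⟩
  · rintro ⟨h1, h2⟩ t (ht | ht)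
    · exact h1 t ht
    · exact h2 t ht

lemma perp_symm (hp : IsProper S) {X Y : Set S} (hY : ∀ y ∈ Y, star y ∈ Y)
    (h : X ⊆ pAnn Y) : Y ⊆ pAnn X := by
  intro y hy x hx
  obtain ⟨h1, _⟩ := h hx y hy
  obtain ⟨h3, _⟩ := h hx (star y) (hY y hy)
  constructor
  · have := congrArg star h1
    rwa [star_mul, star_star, star_zero' hp] at this
  · have := congrArg star h3
    rwa [star_mul, star_star, star_star, star_zero' hp] at this


def mulSet {S : Type*} [Mul S] (T : Set S) : Set S := {x | ∃ t ∈ T, ∃ u : S, x = t * u}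

section NA
variable {S : Type*} [SemigroupWithZero S] [StarMul S]
lemma mem_nAnn {T : Set S} {s : S} :
    s ∈ nAnn T ↔ ∀ t ∈ T, ∀ u : S, t * u * s = 0 := Iff.rfl

lemma nAnn_tail (hp : IsProper S) {T : Set S} {s t : S} (hs : s ∈ nAnn T) (ht : t ∈ T)
    (u : S) : s * u * t = 0 := by
  apply p3 hp
  have e : s * u * t * star (s * u * t) * (s * u * t)
      = s * (u * (t * (star t * (star u * star s)) * s * (u * t))) := by
    simp only [star_mul, star_star, mul_assoc]
  rw [e, hs t ht (star t * (star u * star s)), zero_mul, mul_zero, mul_zero]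

lemma nAnn_star (hp : IsProper S) {T : Set S} {s : S} (hs : s ∈ nAnn T) :
    star s ∈ nAnn T := by
  intro t ht u
  apply p3 hp
  have e : t * u * star s * star (t * u * star s) * (t * u * star s)
      = t * (u * star s) * s * (star u * (star t * (t * (u * star s)))) := by
    simp only [star_mul, star_star, mul_assoc]
  rw [e, hs t ht (u * star s), zero_mul]

lemma nAnn_mul_left (hp : IsProper S) {T : Set S} {s t : S} (ht : t ∈ T)
    (hs : s ∈ nAnn T) : t * s = 0 := by
  apply p3 hp
  have e : t * s * star (t * s) * (t * s) = t * (s * (star s * (star t * t))) * s := by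
    simp only [star_mul, star_star, mul_assoc]
  rw [e, hs t ht (s * (star s * (star t * t)))]

lemma nAnn_mul_right (hp : IsProper S) {T : Set S} {s t : S} (ht : t ∈ T)
    (hs : s ∈ nAnn T) : s * t = 0 := by
  apply p3 hp
  have e : s * t * star (s * t) * (s * t) = s * (t * (star t * star s) * s * t) := by
    simp only [star_mul, star_star, mul_assoc]
  rw [e, hs t ht (star t * star s), zero_mul, mul_zero]

lemma nAnn_ideal_r {T : Set S} {s : S} (hs : s ∈ nAnn T) (r : S) : s * r ∈ nAnn T := by
  intro t ht u
  rw [← mul_assoc (t * u) s r, hs t ht u, zero_mul]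

lemma nAnn_ideal_l {T : Set S} {s : S} (hs : s ∈ nAnn T) (r : S) : r * s ∈ nAnn T := by
  intro t ht u
  have e : t * u * (r * s) = t * (u * r) * s := by simp only [mul_assoc]
  rw [e, hs t ht (u * r)]

lemma nAnn_eq_pAnn (hp : IsProper S) (T : Set S) : nAnn T = pAnn (mulSet T) := by
  ext s
  constructor
  · rintro hs x ⟨t, ht, u, rfl⟩
    exact ⟨nAnn_star hp hs t ht u, hs t ht u⟩
  · intro hs t ht u
    exact (hs (t * u) ⟨t, ht, u, rfl⟩).2

lemma inter_nAnn_self (hp : IsProper S) {T : Set S} : T ∩ nAnn T ⊆ {(0:S)} := by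
  rintro x ⟨hxT, hxN⟩
  exact p1 hp (nAnn_mul_left hp hxT (nAnn_star hp hxN))

lemma pAnn_nAnn_eq (hp : IsProper S) (T : Set S) : pAnn (nAnn T) = nAnn (nAnn T) := by
  apply Set.Subset.antisymm
  · intro r hr j hj u
    exact (hr (j * u) (nAnn_ideal_r hj u)).2
  · intro r hr j hj
    exact ⟨nAnn_mul_left hp hj (nAnn_star hp hr), nAnn_mul_left hp hj hr⟩

lemma sandwich {TY : Set S} {y : S} (hy : y ∈ pAnn TY) (ρ : S) :
    y * ρ * star y ∈ pAnn TY := by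
  intro w hw
  obtain ⟨h1, h2⟩ := hy w hw
  constructor
  · have e : w * star (y * ρ * star y) = w * y * (star ρ * star y) := by
      simp only [star_mul, star_star, mul_assoc]
    rw [e, h2, zero_mul]
  · have e : w * (y * ρ * star y) = w * y * (ρ * star y) := by
      simp only [mul_assoc]
    rw [e, h2, zero_mul]


end NA
section Core
variable {S : Type*} [SemigroupWithZero S] [StarMul S]

lemma pAnn_dp_eq (hp : IsProper S) {a : S} {Y : Set S}
    (h : pAnn (pAnn ({a} : Set S)) = Y) : pAnn Y = pAnn ({a} : Set S) := by
  rw [← h, pAnn_triple hp]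

lemma gen_mem (hp : IsProper S) {a : S} {Y : Set S}
    (h1 : pAnn (pAnn ({a} : Set S)) = Y) (h2 : pAnn (pAnn ({star a} : Set S)) = Y) :
    a ∈ Y := by
  have hps : pAnn ({a} : Set S) = pAnn ({star a} : Set S) := by
    rw [← pAnn_dp_eq hp h1]
    exact pAnn_dp_eq hp h2
  rw [← h1]
  intro w hw
  have hw' : w ∈ pAnn ({star a} : Set S) := hps ▸ hw
  obtain ⟨ha1, _⟩ := hw a rfl
  obtain ⟨hb1, _⟩ := hw' (star a) rfl
  constructor
  · have := congrArg star ha1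
    rwa [star_mul, star_star, star_zero' hp] at this
  · have := congrArg star hb1
    rwa [star_mul, star_star, star_star, star_zero' hp] at this

lemma r1 (hp : IsProper S) {s g : S} (hg : g ∈ pAnn (pAnn ({s} : Set S))) :
    pAnn ({s * g} : Set S) = pAnn ({g} : Set S) := by
  apply Set.Subset.antisymm
  · intro ρ hρ
    obtain ⟨h1, h2⟩ := hρ (s * g) rfl
    have key : ∀ ρ' : S, s * g * ρ' = 0 → g * ρ' = 0 := by
      intro ρ' hzero
      set w := g * ρ' * (star ρ' * star g) with hw
      have hsw : s * w = 0 := by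
        have e : s * (g * ρ' * (star ρ' * star g)) = s * g * ρ' * (star ρ' * star g) := by
          simp only [mul_assoc]
        rw [hw, e, hzero, zero_mul]
      have hwsa : star w = w := by
        rw [hw]; simp only [star_mul, star_star, mul_assoc]
      have hwmem : w ∈ pAnn ({s} : Set S) := by
        intro t ht; rw [Set.mem_singleton_iff] at ht; subst ht
        exact ⟨by rw [hwsa]; exact hsw, hsw⟩
      obtain ⟨_, hwg⟩ := hg w hwmem
      apply p3 hp
      have e : g * ρ' * star (g * ρ') * (g * ρ') = w * g * ρ' := by
        rw [hw]; simp only [star_mul, star_star, mul_assoc]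
      rw [e, hwg, zero_mul]
    intro t ht; rw [Set.mem_singleton_iff] at ht; subst ht
    exact ⟨key (star ρ) h1, key ρ h2⟩
  · exact right_factor

lemma tsub (hp : IsProper S) {r s : S}
    (h : pAnn (pAnn ({r} : Set S)) = pAnn (pAnn ({star s} : Set S))) :
    pAnn ({r * s} : Set S) = pAnn ({s} : Set S) := by
  have hps : pAnn ({r} : Set S) = pAnn ({star s} : Set S) := by
    have := congrArg pAnn h
    rwa [pAnn_triple hp, pAnn_triple hp] at this
  apply Set.Subset.antisymm
  · intro ρ hρ
    obtain ⟨h1, h2⟩ := hρ (r * s) rfl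
    have key : ∀ ρ' : S, r * s * ρ' = 0 → s * ρ' = 0 := by
      intro ρ' hzero
      set w := s * ρ' * (star ρ' * star s) with hw
      have hrw : r * w = 0 := by
        have e : r * (s * ρ' * (star ρ' * star s)) = r * s * ρ' * (star ρ' * star s) := by
          simp only [mul_assoc]
        rw [hw, e, hzero, zero_mul]
      have hwsa : star w = w := by
        rw [hw]; simp only [star_mul, star_star, mul_assoc]
      have hwmem : w ∈ pAnn ({star s} : Set S) := by
        rw [← hps]
        intro t ht; rw [Set.mem_singleton_iff] at ht; subst ht
        exact ⟨by rw [hwsa]; exact hrw, hrw⟩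
      obtain ⟨_, hsw⟩ := hwmem (star s) rfl
      have hmm : (star (s * ρ') * (s * ρ')) * (star (s * ρ') * (s * ρ')) = 0 := by
        have e : (star (s * ρ') * (s * ρ')) * (star (s * ρ') * (s * ρ'))
            = star ρ' * (star s * w * (s * ρ')) := by
          rw [hw]; simp only [star_mul, star_star, mul_assoc]
        rw [e, hsw, zero_mul, mul_zero]
      have hm0 : star (s * ρ') * (s * ρ') = 0 :=
        p2 hp (by simp only [star_mul, star_star, mul_assoc]) hmm
      exact hp _ hm0
    intro t ht; rw [Set.mem_singleton_iff] at ht; subst ht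
    exact ⟨key (star ρ) h1, key ρ h2⟩
  · exact right_factor

lemma mlem (hp : IsProper S) {X V : Set S} {x0 v0 : S}
    (hX1 : pAnn (pAnn ({x0} : Set S)) = X) (hX2 : pAnn (pAnn ({star x0} : Set S)) = X)
    (hV1 : pAnn (pAnn ({v0} : Set S)) = V) (hV2 : pAnn (pAnn ({star v0} : Set S)) = V)
    (hXV : X ⊆ V) (hres : V ∩ pAnn X ⊆ {(0:S)}) :
    pAnn (pAnn ({x0 * v0} : Set S)) = V ∧ pAnn (pAnn ({star (x0 * v0)} : Set S)) = X := by
  constructor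
  · have hpe : pAnn ({x0 * v0} : Set S) = pAnn ({v0} : Set S) := by
      apply Set.Subset.antisymm
      · intro ρ hρ
        obtain ⟨h1, h2⟩ := hρ (x0 * v0) rfl
        have key : ∀ ρ' : S, x0 * v0 * ρ' = 0 → v0 * ρ' = 0 := by
          intro ρ' hzero
          set w := v0 * (ρ' * star ρ') * star v0 with hw
          have hx0w : x0 * w = 0 := by
            have e : x0 * (v0 * (ρ' * star ρ') * star v0)
                = x0 * v0 * ρ' * (star ρ' * star v0) := by
              simp only [mul_assoc]
            rw [hw, e, hzero, zero_mul]
          have hwsa : star w = w := by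
            rw [hw]; simp only [star_mul, star_star, mul_assoc]
          have hwX : w ∈ pAnn X := by
            have hmem : w ∈ pAnn ({x0} : Set S) := by
              intro t ht; rw [Set.mem_singleton_iff] at ht; subst ht
              exact ⟨by rw [hwsa]; exact hx0w, hx0w⟩
            rwa [← pAnn_dp_eq hp hX1] at hmem
          have hwV : w ∈ V := by
            have hv0 : v0 ∈ pAnn (pAnn ({v0} : Set S)) := by
              rw [hV1]; exact gen_mem hp hV1 hV2
            have := sandwich hv0 (ρ' * star ρ')
            rw [hV1] at this
            rw [hw]; exact this
          have hw0 : w = 0 := hres ⟨hwV, hwX⟩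
          apply p1 hp
          have e : v0 * ρ' * star (v0 * ρ') = w := by
            rw [hw]; simp only [star_mul, star_star, mul_assoc]
          rw [e, hw0]
        intro t ht; rw [Set.mem_singleton_iff] at ht; subst ht
        exact ⟨key (star ρ) h1, key ρ h2⟩
      · exact right_factor
    rw [show pAnn (pAnn ({x0 * v0} : Set S)) = pAnn (pAnn ({v0} : Set S)) from
      congrArg pAnn hpe, hV1]
  · have hx0X : x0 ∈ X := gen_mem hp hX1 hX2
    have hsx0V : star x0 ∈ V := by
      apply hXV
      rw [← hX1] at hx0X ⊢
      exact star_mem_pAnn hx0X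
    have hg : star x0 ∈ pAnn (pAnn ({star v0} : Set S)) := by rw [hV2]; exact hsx0V
    have hr1 := r1 hp hg
    have e : star (x0 * v0) = star v0 * star x0 := by rw [star_mul]
    rw [e, show pAnn (pAnn ({star v0 * star x0} : Set S))
        = pAnn (pAnn ({star x0} : Set S)) from congrArg pAnn hr1, hX2]

lemma zlem (hp : IsProper S) (T₀ TY : Set S) :
    ∀ t : S, t ∈ pAnn (pAnn TY ∩ nAnn T₀) → t ∈ pAnn (pAnn TY ∩ pAnn (nAnn T₀)) →
    t ∈ pAnn (pAnn TY) := by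
  have aux : ∀ t : S, t ∈ pAnn (pAnn TY ∩ nAnn T₀) → t ∈ pAnn (pAnn TY ∩ pAnn (nAnn T₀)) →
      ∀ y ∈ pAnn TY, t * y = 0 := by
    intro t h1 h2 y hy
    -- two-sided kill of Y∩I and Y∩J elements by t
    have k1 : ∀ v ∈ pAnn TY ∩ nAnn T₀, t * v = 0 := by
      intro v hv
      have hv' : star v ∈ pAnn TY ∩ nAnn T₀ :=
        ⟨star_mem_pAnn hv.1, nAnn_star hp hv.2⟩
      have := (h1 (star v) hv').1
      -- star v * star t = 0
      have e := congrArg star this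
      rwa [star_mul, star_star, star_star, star_zero' hp] at e
    have k2 : ∀ v ∈ pAnn TY ∩ pAnn (nAnn T₀), t * v = 0 := by
      intro v hv
      have hv' : star v ∈ pAnn TY ∩ pAnn (nAnn T₀) :=
        ⟨star_mem_pAnn hv.1, star_mem_pAnn hv.2⟩
      have := (h2 (star v) hv').1
      have e := congrArg star this
      rwa [star_mul, star_star, star_star, star_zero' hp] at e
    -- step 3 : (t*y)*i = 0 for i ∈ nAnn T₀
    have step3 : ∀ i ∈ nAnn T₀, t * y * i = 0 := by
      intro i hi
      apply p1 hp
      have hv : y * (i * star i) * star y ∈ pAnn TY ∩ nAnn T₀ := by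
        constructor
        · exact sandwich hy (i * star i)
        · exact nAnn_ideal_r (nAnn_ideal_l (nAnn_ideal_r hi (star i)) y) (star y)
      have e : t * y * i * star (t * y * i) = t * (y * (i * star i) * star y) * star t := by
        simp only [star_mul, star_star, mul_assoc]
      rw [e, k1 _ hv, zero_mul]
    have step4 : ∀ j ∈ pAnn (nAnn T₀), t * y * j = 0 := by
      intro j hj
      apply p1 hp
      have hjid : j * star j ∈ pAnn (nAnn T₀) := by
        rw [pAnn_nAnn_eq hp] at hj ⊢
        exact nAnn_ideal_r hj (star j)
      have hv : y * (j * star j) * star y ∈ pAnn TY ∩ pAnn (nAnn T₀) := by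
        constructor
        · exact sandwich hy (j * star j)
        · rw [pAnn_nAnn_eq hp] at hjid ⊢
          exact nAnn_ideal_r (nAnn_ideal_l hjid y) (star y)
      have e : t * y * j * star (t * y * j) = t * (y * (j * star j) * star y) * star t := by
        simp only [star_mul, star_star, mul_assoc]
      rw [e, k2 _ hv, zero_mul]
    -- m := star(t*y) * (t*y)
    set m := star (t * y) * (t * y) with hm
    have hmsa : star m = m := by
      rw [hm]; simp only [star_mul, star_star, mul_assoc]
    have hmi : ∀ i ∈ nAnn T₀, m * i = 0 := by
      intro i hi
      have e : m * i = star (t * y) * (t * y * i) := by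
        rw [hm]; simp only [mul_assoc]
      rw [e, step3 i hi, mul_zero]
    have hmj : ∀ j ∈ pAnn (nAnn T₀), m * j = 0 := by
      intro j hj
      have e : m * j = star (t * y) * (t * y * j) := by
        rw [hm]; simp only [mul_assoc]
      rw [e, step4 j hj, mul_zero]
    have hmJ : m ∈ pAnn (nAnn T₀) := by
      intro i hi
      constructor
      · rw [hmsa]
        have := congrArg star (hmi (star i) (nAnn_star hp hi))
        rwa [star_mul, star_star, hmsa, star_zero' hp] at this
      · have := congrArg star (hmi (star i) (nAnn_star hp hi))
        rwa [star_mul, star_star, hmsa, star_zero' hp] at this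
    have hm0 : m = 0 := p2 hp hmsa (hmj m hmJ)
    exact hp _ (by rw [← hm, hm0])
  intro t h1 h2 y hy
  constructor
  · have := aux t h1 h2 (star y) (star_mem_pAnn hy)
    have e := congrArg star this
    rwa [star_mul, star_star, star_zero' hp] at e
  · have h1' : star t ∈ pAnn (pAnn TY ∩ nAnn T₀) := star_mem_pAnn h1
    have h2' : star t ∈ pAnn (pAnn TY ∩ pAnn (nAnn T₀)) := star_mem_pAnn h2
    have := aux (star t) h1' h2' (star y) (star_mem_pAnn hy)
    have e := congrArg star this
    rwa [star_mul, star_star, star_star, star_zero' hp] at e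

end Core

section Helpers
variable {S : Type*} [SemigroupWithZero S] [StarMul S]

lemma join_subset (hp : IsProper S) {ι : Sort*} {G : ι → Set S} {U : Set S}
    (h : ∀ i, G i ⊆ pAnn U) : pAnn (⋂ i, pAnn (G i)) ⊆ pAnn U := by
  have h2 : pAnn (pAnn U) ⊆ ⋂ i, pAnn (G i) :=
    fun w hw => Set.mem_iInter.2 (fun i => pAnn_anti (h i) hw)
  have h3 := pAnn_anti h2
  rwa [pAnn_triple hp U] at h3

lemma subset_join (hp : IsProper S) {ι : Sort*} {G : ι → Set S}
    (hG : ∀ i, ∃ U, G i = pAnn U) (i₀ : ι) :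
    G i₀ ⊆ pAnn (⋂ i, pAnn (G i)) := by
  intro r hr w hw
  have hstar : ∀ x ∈ G i₀, star x ∈ G i₀ := by
    intro x hx
    obtain ⟨U, hU⟩ := hG i₀
    rw [hU] at hx ⊢
    exact star_mem_pAnn hx
  exact subset_dp hp hstar hr w (Set.mem_iInter.1 hw i₀)

end Helpers

end Lemmas

/-- (Generalized comparability.)  Let `S` be a proper
*-semigroup in which `∼` is reflexive and ⊥-complete.  Then for all
`A, B ∈ P(S)^⊥` there is `I ∈ P(S)^∇` with `A ∩ I ≾ B ∩ I` and
`B ∩ I^⊥ ≾ A ∩ I^⊥`. -/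
theorem stmt_18 {S : Type u} [SemigroupWithZero S] [StarMul S]
    (hproper : ∀ s : S, star s * s = 0 → s = 0)
    (hrefl : ∀ A ∈ Pperp S, Sim A A)
    (hcomp : PerpComplete S)
    (A B : Set S) (hA : A ∈ Pperp S) (hB : B ∈ Pperp S) :
    ∃ I ∈ Pnabla S, PrecSim (A ∩ I) (B ∩ I) ∧ PrecSim (B ∩ pAnn I) (A ∩ pAnn I) := by
  classical
  have hp : IsProper S := hproper
  obtain ⟨TA, hTA⟩ := hA
  obtain ⟨TB, hTB⟩ := hB
  -- Zorn: maximal orthogonal family of elementary pairs between A and B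
  obtain ⟨F, hFmax⟩ := zorn_subset
    {F : Set S | (∀ s ∈ F, s ≠ 0 ∧ pAnn (pAnn ({s} : Set S)) ⊆ A ∧
        pAnn (pAnn ({star s} : Set S)) ⊆ B) ∧
      (∀ s ∈ F, ∀ s' ∈ F, s ≠ s' → pAnn (pAnn ({s} : Set S)) ⊆ pAnn ({s'} : Set S) ∧
        pAnn (pAnn ({star s} : Set S)) ⊆ pAnn ({star s'} : Set S))}
    (by
      intro c hc hchain
      refine ⟨⋃₀ c, ⟨?_, ?_⟩, fun Fc hFc => Set.subset_sUnion_of_mem hFc⟩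
      · rintro s ⟨F1, hF1, hs⟩
        exact (hc hF1).1 s hs
      · rintro s ⟨F1, hF1, hs⟩ s' ⟨F2, hF2, hs'⟩ hne
        rcases eq_or_ne F1 F2 with rfl | hF12
        · exact (hc hF1).2 s hs s' hs' hne
        · rcases hchain hF1 hF2 hF12 with hsub | hsub
          · exact (hc hF2).2 s (hsub hs) s' hs' hne
          · exact (hc hF1).2 s hs s' (hsub hs') hne)
  have hFP := hFmax.1.1
  have hFO := hFmax.1.2
  have hA'eq : A ∩ pAnn F = pAnn (TA ∪ F) := by rw [hTA, pAnn_union]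
  have hB'eq : B ∩ pAnn (star '' F) = pAnn (TB ∪ star '' F) := by rw [hTB, pAnn_union]
  -- key consequence of maximality
  have hkey : ∀ a ∈ A ∩ pAnn F, ∀ u : S, ∀ b ∈ B ∩ pAnn (star '' F), a * u * b = 0 := by
    intro a ha u b hb
    by_contra hx0
    have haP : a ∈ pAnn (TA ∪ F) := by rw [← hA'eq]; exact ha
    have hbP : b ∈ pAnn (TB ∪ star '' F) := by rw [← hB'eq]; exact hb
    have hx' : star (a * u * b) ≠ 0 := fun h0 =>
      hx0 (by rw [← star_star (a * u * b), h0, star_zero' hp])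
    have hdpx' : pAnn (pAnn ({star (a * u * b)} : Set S)) ⊆ pAnn (TA ∪ F) := by
      have h1 : pAnn ({star a} : Set S) ⊆ pAnn ({star (a * u * b)} : Set S) := by
        have e : star (a * u * b) = (star b * star u) * star a := by
          simp only [star_mul, mul_assoc]
        rw [e]; exact right_factor
      exact (pAnn_anti h1).trans (dp_subset_of_mem_pAnn hp (star_mem_pAnn haP))
    have hdpx : pAnn (pAnn ({a * u * b} : Set S)) ⊆ pAnn (TB ∪ star '' F) := by
      have h1 : pAnn ({b} : Set S) ⊆ pAnn ({a * u * b} : Set S) := right_factor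
      exact (pAnn_anti h1).trans (dp_subset_of_mem_pAnn hp hbP)
    have singsub : ∀ s' ∈ F, ({s'} : Set S) ⊆ TA ∪ F := by
      intro s' hs' t ht
      rw [Set.mem_singleton_iff] at ht; subst ht
      exact Or.inr hs'
    have singsubB : ∀ s' ∈ F, ({star s'} : Set S) ⊆ TB ∪ star '' F := by
      intro s' hs' t ht
      rw [Set.mem_singleton_iff] at ht; subst ht
      exact Or.inr ⟨s', hs', rfl⟩
    have dir1 : ∀ s' ∈ F, pAnn (pAnn ({star (a * u * b)} : Set S)) ⊆ pAnn ({s'} : Set S) :=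
      fun s' hs' => hdpx'.trans (pAnn_anti (singsub s' hs'))
    have dir1' : ∀ s' ∈ F, pAnn (pAnn ({a * u * b} : Set S)) ⊆ pAnn ({star s'} : Set S) :=
      fun s' hs' => hdpx.trans (pAnn_anti (singsubB s' hs'))
    have dir2 : ∀ s' ∈ F, pAnn (pAnn ({s'} : Set S)) ⊆ pAnn ({star (a * u * b)} : Set S) := by
      intro s' hs'
      have h1 : pAnn (pAnn ({star (a * u * b)} : Set S)) ⊆
          pAnn (pAnn (pAnn ({s'} : Set S))) := by
        refine (dir1 s' hs').trans ?_
        rw [pAnn_triple hp]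
      have h2 := perp_symm hp (fun y hy => star_mem_pAnn hy) h1
      rwa [pAnn_triple hp] at h2
    have dir2' : ∀ s' ∈ F, pAnn (pAnn ({star s'} : Set S)) ⊆ pAnn ({a * u * b} : Set S) := by
      intro s' hs'
      have h1 : pAnn (pAnn ({a * u * b} : Set S)) ⊆
          pAnn (pAnn (pAnn ({star s'} : Set S))) := by
        refine (dir1' s' hs').trans ?_
        rw [pAnn_triple hp]
      have h2 := perp_symm hp (fun y hy => star_mem_pAnn hy) h1
      rwa [pAnn_triple hp] at h2
    have hnotmem : star (a * u * b) ∉ F := by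
      intro hmem
      have h1 := dir1 (star (a * u * b)) hmem
      have h2 : star (star (a * u * b)) * star (a * u * b) ∈
          pAnn (pAnn ({star (a * u * b)} : Set S)) := sq_mem_dpT hp rfl
      have h3 := (h1 h2 (star (a * u * b)) rfl).2
      apply hx'
      apply p3 hp
      rw [mul_assoc]
      exact h3
    have hFam' : (insert (star (a * u * b)) F) ∈
        {F : Set S | (∀ s ∈ F, s ≠ 0 ∧ pAnn (pAnn ({s} : Set S)) ⊆ A ∧
            pAnn (pAnn ({star s} : Set S)) ⊆ B) ∧
          (∀ s ∈ F, ∀ s' ∈ F, s ≠ s' → pAnn (pAnn ({s} : Set S)) ⊆ pAnn ({s'} : Set S) ∧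
            pAnn (pAnn ({star s} : Set S)) ⊆ pAnn ({star s'} : Set S))} := by
      constructor
      · rintro s (rfl | hs)
        · refine ⟨hx', ?_, ?_⟩
          · intro r hr
            have : r ∈ A ∩ pAnn F := by rw [hA'eq]; exact hdpx' hr
            exact this.1
          · intro r hr
            rw [star_star] at hr
            have : r ∈ B ∩ pAnn (star '' F) := by rw [hB'eq]; exact hdpx hr
            exact this.1
        · exact hFP s hs
      · rintro s (rfl | hs) s' (rfl | hs') hne
        · exact absurd rfl hne
        · refine ⟨dir1 s' hs', ?_⟩
          rw [star_star]
          exact dir1' s' hs'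
        · refine ⟨dir2 s hs, ?_⟩
          rw [star_star]
          exact dir2' s hs
        · exact hFO s hs s' hs' hne
    exact hnotmem ((hFmax.2 hFam' (Set.subset_insert _ _)) (Set.mem_insert _ _))
  -- the nabla set
  refine ⟨nAnn (A ∩ pAnn F), ⟨A ∩ pAnn F, rfl⟩, ?_, ?_⟩
  · -- GOAL 1
    have hIp : nAnn (A ∩ pAnn F) = pAnn (mulSet (A ∩ pAnn F)) := nAnn_eq_pAnn hp _
    have hAI : A ∩ nAnn (A ∩ pAnn F) = pAnn (TA ∪ mulSet (A ∩ pAnn F)) := by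
      rw [pAnn_union, ← hTA, ← hIp]
    have hBI : B ∩ nAnn (A ∩ pAnn F) = pAnn (TB ∪ mulSet (A ∩ pAnn F)) := by
      rw [pAnn_union, ← hTB, ← hIp]
    have hGper : ∀ l : {l : S // l ∈ F},
        (pAnn (pAnn ({l.1} : Set S)) ∩ nAnn (A ∩ pAnn F)) ∈ Pperp S :=
      fun l => ⟨pAnn ({l.1} : Set S) ∪ mulSet (A ∩ pAnn F), by rw [pAnn_union, hIp]⟩
    choose g hg1 hg2 using fun l : {l : S // l ∈ F} => hrefl _ (hGper l)
    have hgmem : ∀ l, g l ∈ pAnn (pAnn ({l.1} : Set S)) ∩ nAnn (A ∩ pAnn F) :=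
      fun l => gen_mem hp (hg1 l) (hg2 l)
    have hdpt : ∀ l, pAnn (pAnn ({l.1 * g l} : Set S)) =
        pAnn (pAnn ({l.1} : Set S)) ∩ nAnn (A ∩ pAnn F) := by
      intro l
      have h := r1 hp (hgmem l).1
      rw [show pAnn (pAnn ({l.1 * g l} : Set S)) = pAnn (pAnn ({g l} : Set S)) from
        congrArg pAnn h]
      exact hg1 l
    have hHsub : ∀ l, pAnn (pAnn ({star (l.1 * g l)} : Set S)) ⊆
        pAnn (pAnn ({star l.1} : Set S)) := by
      intro l
      apply pAnn_anti
      have e : star (l.1 * g l) = star (g l) * star l.1 := by rw [star_mul]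
      rw [e]
      exact right_factor
    have hortA : ∀ l m : {l : S // l ∈ F}, l ≠ m →
        (pAnn (pAnn ({l.1} : Set S)) ∩ nAnn (A ∩ pAnn F)) ⊆
        pAnn (pAnn (pAnn ({m.1} : Set S)) ∩ nAnn (A ∩ pAnn F)) := by
      intro l m hlm r hr
      have h1 : r ∈ pAnn ({m.1} : Set S) :=
        (hFO l.1 l.2 m.1 m.2 (fun e => hlm (Subtype.ext e))).1 hr.1
      have h2 : r ∈ pAnn (pAnn (pAnn ({m.1} : Set S))) := by
        rw [pAnn_triple hp]; exact h1
      exact pAnn_anti Set.inter_subset_left h2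
    have hortB : ∀ l m : {l : S // l ∈ F}, l ≠ m →
        pAnn (pAnn ({star (l.1 * g l)} : Set S)) ⊆
        pAnn (pAnn (pAnn ({star (m.1 * g m)} : Set S))) := by
      intro l m hlm r hr
      have h1 : r ∈ pAnn ({star m.1} : Set S) :=
        (hFO l.1 l.2 m.1 m.2 (fun e => hlm (Subtype.ext e))).2 (hHsub l hr)
      have h2 : r ∈ pAnn (pAnn (pAnn ({star m.1} : Set S))) := by
        rw [pAnn_triple hp]; exact h1
      exact pAnn_anti (hHsub m) h2
    have hsims : ∀ l, Sim (pAnn (pAnn ({l.1} : Set S)) ∩ nAnn (A ∩ pAnn F))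
        (pAnn (pAnn ({star (l.1 * g l)} : Set S))) :=
      fun l => ⟨l.1 * g l, hdpt l, rfl⟩
    have hSim0' : Sim
        (pAnn (⋂ l : {l : S // l ∈ F},
          pAnn (pAnn (pAnn ({l.1} : Set S)) ∩ nAnn (A ∩ pAnn F))))
        (pAnn (⋂ l : {l : S // l ∈ F},
          pAnn (pAnn (pAnn ({star (l.1 * g l)} : Set S))))) :=
      hcomp {l : S // l ∈ F}
        (fun l => pAnn (pAnn ({l.1} : Set S)) ∩ nAnn (A ∩ pAnn F))
        (fun l => pAnn (pAnn ({star (l.1 * g l)} : Set S)))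
        hGper (fun _ => ⟨_, rfl⟩) hortA hortB hsims
    have hGsubAI : ∀ l : {l : S // l ∈ F},
        (pAnn (pAnn ({l.1} : Set S)) ∩ nAnn (A ∩ pAnn F)) ⊆
        pAnn (TA ∪ mulSet (A ∩ pAnn F)) := by
      intro l r hr
      rw [← hAI]
      exact ⟨(hFP l.1 l.2).2.1 hr.1, hr.2⟩
    have hXsub : pAnn (⋂ l : {l : S // l ∈ F},
        pAnn (pAnn (pAnn ({l.1} : Set S)) ∩ nAnn (A ∩ pAnn F))) ⊆
        A ∩ nAnn (A ∩ pAnn F) := by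
      rw [hAI]
      exact join_subset hp hGsubAI
    have hHsubBI : ∀ l, pAnn (pAnn ({star (l.1 * g l)} : Set S)) ⊆
        pAnn (TB ∪ mulSet (A ∩ pAnn F)) := by
      intro l r hr
      rw [← hBI]
      constructor
      · exact (hFP l.1 l.2).2.2 (hHsub l hr)
      · have htI : l.1 * g l ∈ nAnn (A ∩ pAnn F) := nAnn_ideal_l (hgmem l).2 l.1
        have hstI : star (l.1 * g l) ∈ pAnn (mulSet (A ∩ pAnn F)) := by
          rw [← hIp]
          exact nAnn_star hp htI
        have h2 := dp_subset_of_mem_pAnn hp hstI hr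
        rw [← hIp] at h2
        exact h2
    have hXHsub : pAnn (⋂ l : {l : S // l ∈ F},
        pAnn (pAnn (pAnn ({star (l.1 * g l)} : Set S)))) ⊆
        B ∩ nAnn (A ∩ pAnn F) := by
      rw [hBI]
      exact join_subset hp hHsubBI
    have hres : (A ∩ nAnn (A ∩ pAnn F)) ∩
        pAnn (pAnn (⋂ l : {l : S // l ∈ F},
          pAnn (pAnn (pAnn ({l.1} : Set S)) ∩ nAnn (A ∩ pAnn F)))) ⊆ {(0:S)} := by
      rintro v ⟨⟨hvA, hvI⟩, hvX⟩
      have hvGl : ∀ l : {l : S // l ∈ F},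
          v ∈ pAnn (pAnn (pAnn ({l.1} : Set S)) ∩ nAnn (A ∩ pAnn F)) := by
        intro l
        have hGX := subset_join hp
          (fun m : {l : S // l ∈ F} => hGper m) l
        exact pAnn_anti hGX hvX
      have hvl : ∀ l : {l : S // l ∈ F}, v ∈ pAnn ({l.1} : Set S) := by
        intro l
        have h2 : v ∈ pAnn (pAnn (pAnn ({l.1} : Set S)) ∩ pAnn (nAnn (A ∩ pAnn F))) := by
          intro w hw
          have c1 := (hw.2 v hvI).1
          have c2 := (hw.2 (star v) (nAnn_star hp hvI)).1
          constructor
          · have := congrArg star c1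
            rwa [star_mul, star_star, star_zero' hp] at this
          · have := congrArg star c2
            rwa [star_mul, star_star, star_star, star_zero' hp] at this
        have h3 := zlem hp (A ∩ pAnn F) (pAnn ({l.1} : Set S)) v (hvGl l) h2
        rwa [pAnn_triple hp] at h3
      have hvA' : v ∈ A ∩ pAnn F := ⟨hvA, fun s hs => hvl ⟨s, hs⟩ s rfl⟩
      exact inter_nAnn_self hp ⟨hvA', hvI⟩
    obtain ⟨v0, hv01, hv02⟩ := hrefl _
      (⟨TA ∪ mulSet (A ∩ pAnn F), hAI⟩ : (A ∩ nAnn (A ∩ pAnn F)) ∈ Pperp S)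
    obtain ⟨x0, hx01, hx02⟩ := hrefl _
      ((⟨_, rfl⟩ : pAnn (⋂ l : {l : S // l ∈ F},
        pAnn (pAnn (pAnn ({l.1} : Set S)) ∩ nAnn (A ∩ pAnn F))) ∈ Pperp S))
    obtain ⟨hm1, hm2⟩ := mlem hp hx01 hx02 hv01 hv02 hXsub hres
    obtain ⟨τ, hτ1, hτ2⟩ := hSim0'
    have hcond1 : pAnn (pAnn ({τ} : Set S)) = pAnn (pAnn ({star (x0 * v0)} : Set S)) := by
      rw [hτ1]; exact hm2.symm
    have ht1 := tsub hp hcond1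
    have hw1 : pAnn (pAnn ({τ * (x0 * v0)} : Set S)) = A ∩ nAnn (A ∩ pAnn F) := by
      rw [show pAnn (pAnn ({τ * (x0 * v0)} : Set S)) =
        pAnn (pAnn ({x0 * v0} : Set S)) from congrArg pAnn ht1]
      exact hm1
    have hcond2 : pAnn (pAnn ({star (x0 * v0)} : Set S)) =
        pAnn (pAnn ({star (star τ)} : Set S)) := by
      rw [star_star, hm2, hτ1]
    have ht2 := tsub hp hcond2
    have hw2 : pAnn (pAnn ({star (τ * (x0 * v0))} : Set S)) =
        pAnn (⋂ l : {l : S // l ∈ F},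
          pAnn (pAnn (pAnn ({star (l.1 * g l)} : Set S)))) := by
      have e : star (τ * (x0 * v0)) = star (x0 * v0) * star τ := by rw [star_mul]
      rw [e, show pAnn (pAnn ({star (x0 * v0) * star τ} : Set S)) =
        pAnn (pAnn ({star τ} : Set S)) from congrArg pAnn ht2]
      exact hτ2
    exact ⟨_, ⟨_, rfl⟩, ⟨τ * (x0 * v0), hw1, hw2⟩, hXHsub⟩
  · -- GOAL 2
    have hJeq : pAnn (nAnn (A ∩ pAnn F)) = nAnn (nAnn (A ∩ pAnn F)) := pAnn_nAnn_eq hp _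
    have hBJ : B ∩ pAnn (nAnn (A ∩ pAnn F)) = pAnn (TB ∪ nAnn (A ∩ pAnn F)) := by
      rw [pAnn_union, ← hTB]
    have hAJ : A ∩ pAnn (nAnn (A ∩ pAnn F)) = pAnn (TA ∪ nAnn (A ∩ pAnn F)) := by
      rw [pAnn_union, ← hTA]
    have hGper : ∀ l : {l : S // l ∈ F},
        (pAnn (pAnn ({star l.1} : Set S)) ∩ pAnn (nAnn (A ∩ pAnn F))) ∈ Pperp S :=
      fun l => ⟨pAnn ({star l.1} : Set S) ∪ nAnn (A ∩ pAnn F), by rw [pAnn_union]⟩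
    choose g hg1 hg2 using fun l : {l : S // l ∈ F} => hrefl _ (hGper l)
    have hgmem : ∀ l, g l ∈ pAnn (pAnn ({star l.1} : Set S)) ∩ pAnn (nAnn (A ∩ pAnn F)) :=
      fun l => gen_mem hp (hg1 l) (hg2 l)
    have hdpt : ∀ l, pAnn (pAnn ({star l.1 * g l} : Set S)) =
        pAnn (pAnn ({star l.1} : Set S)) ∩ pAnn (nAnn (A ∩ pAnn F)) := by
      intro l
      have h := r1 hp (hgmem l).1
      rw [show pAnn (pAnn ({star l.1 * g l} : Set S)) = pAnn (pAnn ({g l} : Set S)) from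
        congrArg pAnn h]
      exact hg1 l
    have hHsub : ∀ l, pAnn (pAnn ({star (star l.1 * g l)} : Set S)) ⊆
        pAnn (pAnn ({l.1} : Set S)) := by
      intro l
      have h2 : pAnn (pAnn ({star (star l.1 * g l)} : Set S)) ⊆
          pAnn (pAnn ({star (star l.1)} : Set S)) := by
        apply pAnn_anti
        have e : star (star l.1 * g l) = star (g l) * star (star l.1) := by rw [star_mul]
        rw [e]
        exact right_factor
      rwa [star_star] at h2
    have hortA : ∀ l m : {l : S // l ∈ F}, l ≠ m →
        (pAnn (pAnn ({star l.1} : Set S)) ∩ pAnn (nAnn (A ∩ pAnn F))) ⊆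
        pAnn (pAnn (pAnn ({star m.1} : Set S)) ∩ pAnn (nAnn (A ∩ pAnn F))) := by
      intro l m hlm r hr
      have h1 : r ∈ pAnn ({star m.1} : Set S) :=
        (hFO l.1 l.2 m.1 m.2 (fun e => hlm (Subtype.ext e))).2 hr.1
      have h2 : r ∈ pAnn (pAnn (pAnn ({star m.1} : Set S))) := by
        rw [pAnn_triple hp]; exact h1
      exact pAnn_anti Set.inter_subset_left h2
    have hortB : ∀ l m : {l : S // l ∈ F}, l ≠ m →
        pAnn (pAnn ({star (star l.1 * g l)} : Set S)) ⊆
        pAnn (pAnn (pAnn ({star (star m.1 * g m)} : Set S))) := by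
      intro l m hlm r hr
      have h1 : r ∈ pAnn ({m.1} : Set S) :=
        (hFO l.1 l.2 m.1 m.2 (fun e => hlm (Subtype.ext e))).1 (hHsub l hr)
      have h2 : r ∈ pAnn (pAnn (pAnn ({m.1} : Set S))) := by
        rw [pAnn_triple hp]; exact h1
      exact pAnn_anti (hHsub m) h2
    have hsims : ∀ l, Sim (pAnn (pAnn ({star l.1} : Set S)) ∩ pAnn (nAnn (A ∩ pAnn F)))
        (pAnn (pAnn ({star (star l.1 * g l)} : Set S))) :=
      fun l => ⟨star l.1 * g l, hdpt l, rfl⟩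
    have hSim0' : Sim
        (pAnn (⋂ l : {l : S // l ∈ F},
          pAnn (pAnn (pAnn ({star l.1} : Set S)) ∩ pAnn (nAnn (A ∩ pAnn F)))))
        (pAnn (⋂ l : {l : S // l ∈ F},
          pAnn (pAnn (pAnn ({star (star l.1 * g l)} : Set S))))) :=
      hcomp {l : S // l ∈ F}
        (fun l => pAnn (pAnn ({star l.1} : Set S)) ∩ pAnn (nAnn (A ∩ pAnn F)))
        (fun l => pAnn (pAnn ({star (star l.1 * g l)} : Set S)))
        hGper (fun _ => ⟨_, rfl⟩) hortA hortB hsims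
    have hGsubBJ : ∀ l : {l : S // l ∈ F},
        (pAnn (pAnn ({star l.1} : Set S)) ∩ pAnn (nAnn (A ∩ pAnn F))) ⊆
        pAnn (TB ∪ nAnn (A ∩ pAnn F)) := by
      intro l r hr
      rw [← hBJ]
      exact ⟨(hFP l.1 l.2).2.2 hr.1, hr.2⟩
    have hXsub : pAnn (⋂ l : {l : S // l ∈ F},
        pAnn (pAnn (pAnn ({star l.1} : Set S)) ∩ pAnn (nAnn (A ∩ pAnn F)))) ⊆
        B ∩ pAnn (nAnn (A ∩ pAnn F)) := by
      rw [hBJ]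
      exact join_subset hp hGsubBJ
    have hHsubAJ : ∀ l, pAnn (pAnn ({star (star l.1 * g l)} : Set S)) ⊆
        pAnn (TA ∪ nAnn (A ∩ pAnn F)) := by
      intro l r hr
      rw [← hAJ]
      constructor
      · exact (hFP l.1 l.2).2.1 (hHsub l hr)
      · have hgJ : g l ∈ nAnn (nAnn (A ∩ pAnn F)) := by
          rw [← hJeq]
          exact (hgmem l).2
        have htJ : star l.1 * g l ∈ nAnn (nAnn (A ∩ pAnn F)) :=
          nAnn_ideal_l hgJ (star l.1)
        have hstJ : star (star l.1 * g l) ∈ pAnn (nAnn (A ∩ pAnn F)) := by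
          rw [hJeq]
          exact nAnn_star hp htJ
        exact dp_subset_of_mem_pAnn hp hstJ hr
    have hXHsub : pAnn (⋂ l : {l : S // l ∈ F},
        pAnn (pAnn (pAnn ({star (star l.1 * g l)} : Set S)))) ⊆
        A ∩ pAnn (nAnn (A ∩ pAnn F)) := by
      rw [hAJ]
      exact join_subset hp hHsubAJ
    have hres : (B ∩ pAnn (nAnn (A ∩ pAnn F))) ∩
        pAnn (pAnn (⋂ l : {l : S // l ∈ F},
          pAnn (pAnn (pAnn ({star l.1} : Set S)) ∩ pAnn (nAnn (A ∩ pAnn F))))) ⊆ {(0:S)} := by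
      rintro v ⟨⟨hvB, hvJ⟩, hvX⟩
      have hvJ' : v ∈ nAnn (nAnn (A ∩ pAnn F)) := by
        rw [← hJeq]
        exact hvJ
      have hvGl : ∀ l : {l : S // l ∈ F},
          v ∈ pAnn (pAnn (pAnn ({star l.1} : Set S)) ∩ pAnn (nAnn (A ∩ pAnn F))) := by
        intro l
        have hGX := subset_join hp
          (fun m : {l : S // l ∈ F} => hGper m) l
        exact pAnn_anti hGX hvX
      have hvl : ∀ l : {l : S // l ∈ F}, v ∈ pAnn ({star l.1} : Set S) := by
        intro l
        have h1 : v ∈ pAnn (pAnn (pAnn ({star l.1} : Set S)) ∩ nAnn (nAnn (A ∩ pAnn F))) := by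
          rw [← hJeq]
          exact hvGl l
        have h2 : v ∈ pAnn (pAnn (pAnn ({star l.1} : Set S)) ∩
            pAnn (nAnn (nAnn (A ∩ pAnn F)))) := by
          intro w hw
          have c1 := (hw.2 v hvJ').1
          have c2 := (hw.2 (star v) (nAnn_star hp hvJ')).1
          constructor
          · have := congrArg star c1
            rwa [star_mul, star_star, star_zero' hp] at this
          · have := congrArg star c2
            rwa [star_mul, star_star, star_star, star_zero' hp] at this
        have h3 := zlem hp (nAnn (A ∩ pAnn F)) (pAnn ({star l.1} : Set S)) v h1 h2
        rwa [pAnn_triple hp] at h3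
      have hvB' : v ∈ B ∩ pAnn (star '' F) := by
        refine ⟨hvB, ?_⟩
        rintro s ⟨s0, hs0, rfl⟩
        exact hvl ⟨s0, hs0⟩ (star s0) rfl
      have hvI : v ∈ nAnn (A ∩ pAnn F) := fun a ha u => hkey a ha u v hvB'
      exact Set.mem_singleton_iff.mpr (p1 hp ((hvJ v hvI).1))
    obtain ⟨v0, hv01, hv02⟩ := hrefl _
      (⟨TB ∪ nAnn (A ∩ pAnn F), hBJ⟩ : (B ∩ pAnn (nAnn (A ∩ pAnn F))) ∈ Pperp S)
    obtain ⟨x0, hx01, hx02⟩ := hrefl _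
      ((⟨_, rfl⟩ : pAnn (⋂ l : {l : S // l ∈ F},
        pAnn (pAnn (pAnn ({star l.1} : Set S)) ∩ pAnn (nAnn (A ∩ pAnn F)))) ∈ Pperp S))
    obtain ⟨hm1, hm2⟩ := mlem hp hx01 hx02 hv01 hv02 hXsub hres
    obtain ⟨τ, hτ1, hτ2⟩ := hSim0'
    have hcond1 : pAnn (pAnn ({τ} : Set S)) = pAnn (pAnn ({star (x0 * v0)} : Set S)) := by
      rw [hτ1]; exact hm2.symm
    have ht1 := tsub hp hcond1
    have hw1 : pAnn (pAnn ({τ * (x0 * v0)} : Set S)) = B ∩ pAnn (nAnn (A ∩ pAnn F)) := by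
      rw [show pAnn (pAnn ({τ * (x0 * v0)} : Set S)) =
        pAnn (pAnn ({x0 * v0} : Set S)) from congrArg pAnn ht1]
      exact hm1
    have hcond2 : pAnn (pAnn ({star (x0 * v0)} : Set S)) =
        pAnn (pAnn ({star (star τ)} : Set S)) := by
      rw [star_star, hm2, hτ1]
    have ht2 := tsub hp hcond2
    have hw2 : pAnn (pAnn ({star (τ * (x0 * v0))} : Set S)) =
        pAnn (⋂ l : {l : S // l ∈ F},
          pAnn (pAnn (pAnn ({star (star l.1 * g l)} : Set S)))) := by
      have e : star (τ * (x0 * v0)) = star (x0 * v0) * star τ := by rw [star_mul]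
      rw [e, show pAnn (pAnn ({star (x0 * v0) * star τ} : Set S)) =
        pAnn (pAnn ({star τ} : Set S)) from congrArg pAnn ht2]
      exact hτ2
    exact ⟨_, ⟨_, rfl⟩, ⟨τ * (x0 * v0), hw1, hw2⟩, hXHsub⟩



end Stmt18
end

section
/- Let S be a proper *-ring, regarded as a proper *-semigroup under its multiplication. Then: (1) ∼ is ⊥-additive; (2) S is ⊥-cancellative, i.e. for all a, b, s, t ∈ S, {a}^⊥ = {b}^⊥ and a s = a t imply b s = b t; (3) the map r ↦ {r}^⊥⊥ is injective on the projections of S. -/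
namespace Stmt19

/-- The *-annihilator `T^⊥`. -/
def pAnn {S : Type*} [Mul S] [Star S] [Zero S] (T : Set S) : Set S :=
  {s | ∀ t ∈ T, t * star s = 0 ∧ t * s = 0}

/-- `P(S)^⊥ = {T^⊥ : T ⊆ S}`. -/
def Pperp (S : Type*) [Mul S] [Star S] [Zero S] : Set (Set S) := {A | ∃ T : Set S, A = pAnn T}

/-- `A ∼ B`: there is `s ∈ S` with `{s}^⊥⊥ = A` and `{s*}^⊥⊥ = B`. -/
def Sim {S : Type*} [Mul S] [Star S] [Zero S] (A B : Set S) : Prop :=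
  ∃ s : S, pAnn (pAnn {s}) = A ∧ pAnn (pAnn {star s}) = B

section Aux

variable {S : Type*} [Ring S] [StarRing S]

/-- Properness in the form `x x* = 0 → x = 0`. -/
lemma prop' (hp : ∀ s : S, star s * s = 0 → s = 0) {x : S}
    (h : x * star x = 0) : x = 0 := by
  have h1 : star (star x) * star x = 0 := by rwa [star_star]
  have h2 := hp (star x) h1
  have h3 := congrArg star h2
  simpa using h3

/-- Properness kills `a * b` as soon as it kills `a * (b * b*)`. -/
lemma cancel (hp : ∀ s : S, star s * s = 0 → s = 0) {a b : S}
    (h : a * (b * star b) = 0) : a * b = 0 := by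
  apply prop' hp
  have e : (a * b) * star (a * b) = a * (b * star b) * star a := by
    rw [star_mul]; noncomm_ring
  rw [e, h, zero_mul]

lemma star_mem_pAnn {T : Set S} {v : S} (hv : v ∈ pAnn T) : star v ∈ pAnn T := by
  intro t ht
  obtain ⟨h1, h2⟩ := hv t ht
  exact ⟨by rwa [star_star], h1⟩

lemma tt_mem {T : Set S} {t : S} (ht : t ∈ T) : star t * t ∈ pAnn (pAnn T) := by
  intro u hu
  obtain ⟨h1, h2⟩ := hu t ht
  have h3 : u * star t = 0 := by simpa using congrArg star h1
  constructor
  · rw [star_mul, star_star, ← mul_assoc, h3, zero_mul]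
  · rw [← mul_assoc, h3, zero_mul]

/-- The triple-annihilator identity. -/
lemma trip (hp : ∀ s : S, star s * s = 0 → s = 0) (T : Set S) :
    pAnn (pAnn (pAnn T)) = pAnn T := by
  ext v
  constructor
  · intro hv t ht
    obtain ⟨h1, h2⟩ := hv _ (tt_mem ht)
    -- h1 : (star t * t) * star v = 0, h2 : (star t * t) * v = 0
    have hv2 : t * v = 0 := by
      apply hp
      have e : star (t * v) * (t * v) = star v * (star t * t * v) := by
        rw [star_mul]; noncomm_ring
      rw [e, h2, mul_zero]
    have hv1 : t * star v = 0 := by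
      apply hp
      have e : star (t * star v) * (t * star v) = star (star v) * (star t * t * star v) := by
        rw [star_mul]; noncomm_ring
      rw [e, h1, mul_zero]
    exact ⟨hv1, hv2⟩
  · intro hv u hu
    obtain ⟨h1, h2⟩ := hu v hv
    obtain ⟨h3, h4⟩ := hu (star v) (star_mem_pAnn hv)
    constructor
    · simpa using congrArg star h1
    · simpa using congrArg star h3

/-- Annihilator of a sum of "orthogonal" elements. -/
lemma pAnn_add (hp : ∀ s : S, star s * s = 0 → s = 0) {s r : S}
    (h : star s * r = 0) :
    pAnn ({s + r} : Set S) = pAnn ({s} : Set S) ∩ pAnn ({r} : Set S) := by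
  have key : ∀ w : S, (s + r) * w = 0 → s * w = 0 := by
    intro w hw
    apply hp
    have hss : star s * (s + r) = star s * s := by rw [mul_add, h, add_zero]
    have e : star (s * w) * (s * w) = star w * (star s * (s + r) * w)
        - star w * ((star s * r) * w) := by
      rw [star_mul]; noncomm_ring
    rw [h, zero_mul, mul_zero, sub_zero, hss] at e
    have e2 : star s * s * w = star s * ((s + r) * w) := by
      rw [← hss, mul_assoc]
    rw [e, e2, hw, mul_zero, mul_zero]
  ext v
  constructor
  · intro hv
    obtain ⟨h1, h2⟩ := hv (s + r) rfl
    have hs1 : s * star v = 0 := key _ h1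
    have hs2 : s * v = 0 := key _ h2
    have hr1 : r * star v = 0 := by
      have : r * star v = (s + r) * star v - s * star v := by noncomm_ring
      rw [this, h1, hs1, sub_zero]
    have hr2 : r * v = 0 := by
      have : r * v = (s + r) * v - s * v := by noncomm_ring
      rw [this, h2, hs2, sub_zero]
    constructor
    · intro t ht; rw [Set.mem_singleton_iff] at ht; subst ht; exact ⟨hs1, hs2⟩
    · intro t ht; rw [Set.mem_singleton_iff] at ht; subst ht; exact ⟨hr1, hr2⟩
  · rintro ⟨hvs, hvr⟩ t ht
    rw [Set.mem_singleton_iff] at ht; subst ht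
    obtain ⟨hs1, hs2⟩ := hvs s rfl
    obtain ⟨hr1, hr2⟩ := hvr r rfl
    constructor
    · rw [add_mul, hs1, hr1, add_zero]
    · rw [add_mul, hs2, hr2, add_zero]

end Aux

/-- Let `S` be a proper *-ring (regarded as a proper
*-semigroup under multiplication).  Then
(1) `∼` is ⊥-additive;
(2) `S` is ⊥-cancellative;
(3) `r ↦ {r}^⊥⊥` is injective on projections. -/
theorem stmt_19 {S : Type*} [Ring S] [StarRing S]
    (hproper : ∀ s : S, star s * s = 0 → s = 0) :
    -- (1) ∼ is ⊥-additive
    (∀ A B C D : Set S, A ∈ Pperp S → B ∈ Pperp S → C ∈ Pperp S → D ∈ Pperp S →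
      A ⊆ pAnn B → C ⊆ pAnn D → Sim A C → Sim B D →
      Sim (pAnn (pAnn A ∩ pAnn B)) (pAnn (pAnn C ∩ pAnn D))) ∧
    -- (2) S is ⊥-cancellative
    (∀ a b s t : S, pAnn {a} = pAnn {b} → a * s = a * t → b * s = b * t) ∧
    -- (3) r ↦ {r}^⊥⊥ is injective on projections
    (∀ p q : S, (star p = p ∧ p * p = p) → (star q = q ∧ q * q = q) →
      pAnn (pAnn ({p} : Set S)) = pAnn (pAnn ({q} : Set S)) → p = q) := by
  refine ⟨?_, ?_, ?_⟩
  · -- (1)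
    intro A B C D _ _ _ _ hAB hCD hAC hBD
    obtain ⟨s, hsA, hsC⟩ := hAC
    obtain ⟨r, hrB, hrD⟩ := hBD
    have pA : pAnn A = pAnn ({s} : Set S) := by rw [← hsA, trip hproper]
    have pB : pAnn B = pAnn ({r} : Set S) := by rw [← hrB, trip hproper]
    have pC : pAnn C = pAnn ({star s} : Set S) := by rw [← hsC, trip hproper]
    have pD : pAnn D = pAnn ({star r} : Set S) := by rw [← hrD, trip hproper]
    -- orthogonality relations
    have o1 : r * star s = 0 := by
      have hm : star s * s ∈ A := by rw [← hsA]; exact tt_mem rfl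
      have hm2 := hAB hm
      rw [pB] at hm2
      obtain ⟨_, h2⟩ := hm2 r rfl
      exact cancel hproper (by rwa [star_star])
    have o2 : star r * s = 0 := by
      have hm : star (star s) * star s ∈ C := by rw [← hsC]; exact tt_mem rfl
      have hm2 := hCD hm
      rw [pD] at hm2
      obtain ⟨_, h2⟩ := hm2 (star r) rfl
      rw [star_star] at h2
      exact cancel hproper h2
    have o3 : star s * r = 0 := by simpa using congrArg star o2
    have o4 : star (star s) * star r = 0 := by
      rw [star_star]; simpa using congrArg star o1
    refine ⟨s + r, ?_, ?_⟩
    · rw [pAnn_add hproper o3, pA, pB]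
    · rw [star_add, pAnn_add hproper o4, pC, pD]
  · -- (2)
    intro a b s t hab hst
    have hu : a * (s - t) = 0 := by rw [mul_sub, hst, sub_self]
    have hmem : (s - t) * star (s - t) ∈ pAnn ({a} : Set S) := by
      intro x hx
      rw [Set.mem_singleton_iff] at hx; subst hx
      constructor
      · rw [star_mul, star_star, ← mul_assoc, hu, zero_mul]
      · rw [← mul_assoc, hu, zero_mul]
    rw [hab] at hmem
    obtain ⟨_, h2⟩ := hmem b rfl
    have h3 : b * (s - t) = 0 := cancel hproper h2
    have h4 : b * s - b * t = 0 := by rw [← mul_sub]; exact h3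
    exact sub_eq_zero.mp h4
  · -- (3)
    intro p q hp hq heq
    obtain ⟨hp1, hp2⟩ := hp
    obtain ⟨hq1, hq2⟩ := hq
    have hpin : ∀ u : S, star u = u → u * u = u → u ∈ pAnn (pAnn ({u} : Set S)) := by
      intro u h1 h2 w hw
      obtain ⟨hw1, hw2⟩ := hw u rfl
      have h3 : w * star u = 0 := by simpa using congrArg star hw1
      exact ⟨h3, by rwa [← h1]⟩
    have hone : ∀ u : S, star u = u → u * u = u → (1 : S) - u ∈ pAnn ({u} : Set S) := by
      intro u h1 h2 x hx
      rw [Set.mem_singleton_iff] at hx; subst hx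
      constructor
      · rw [star_sub, star_one, h1, mul_sub, mul_one, h2, sub_self]
      · rw [mul_sub, mul_one, h2, sub_self]
    have hpq : p ∈ pAnn (pAnn ({q} : Set S)) := by rw [← heq]; exact hpin p hp1 hp2
    have hqp : q ∈ pAnn (pAnn ({p} : Set S)) := by rw [heq]; exact hpin q hq1 hq2
    obtain ⟨_, hB⟩ := hpq (1 - q) (hone q hq1 hq2)
    obtain ⟨_, hB'⟩ := hqp (1 - p) (hone p hp1 hp2)
    have e1 : p = q * p := by
      have h := hB; rw [sub_mul, one_mul, sub_eq_zero] at h; exact h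
    have e2 : q = p * q := by
      have h := hB'; rw [sub_mul, one_mul, sub_eq_zero] at h; exact h
    calc p = star p := hp1.symm
      _ = star (q * p) := by rw [← e1]
      _ = p * q := by rw [star_mul, hp1, hq1]
      _ = q := e2.symm

end Stmt19
end
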